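/- arXiv:1902.09012 — 2 statements merged into one kernel-verified Lean document; each statement's English description precedes it below -/
import Mathlib

section
/- Let a₁ be a nonzero real constant. For all smooth functions k₁, k₂ : ℝ → ℝ, the commutation relation [Q(k₁), Q(k₂)] = W(t ↦ (k₁'(t)k₂(t) − k₁(t)k₂'(t))/2) holds as an equality of maps ℝ⁷ → ℝ⁷. -/
noncomputable section

/-- ℝ⁷ with coordinates `(t,x,y,z,u,v,w)` indexed by `0,…,6`. -/
abbrev R7 : Type := Fin 7 → ℝ

/-- The Lie bracket of two vector fields `A B : R7 → R7`:
`[A,B](p) = DB(p)·A(p) − DA(p)·B(p)`. -/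
def bracket (A B : R7 → R7) : R7 → R7 :=
  fun p => fderiv ℝ B p (A p) - fderiv ℝ A p (B p)

/-- `X₁ = ∂t`. -/
def X1 : R7 → R7 := fun _ => ![1, 0, 0, 0, 0, 0, 0]

/-- `X₂ = 2t∂t + x∂x + y∂y + z∂z − u∂u − v∂v − 2w∂w`. -/
def X2 : R7 → R7 := fun p => ![2 * p 0, p 1, p 2, p 3, -p 4, -p 5, -2 * p 6]

/-- `X₃ = z∂x − x∂z`. -/
def X3 : R7 → R7 := fun p => ![0, p 3, 0, -p 1, 0, 0, 0]

/-- `Y(f) = f(t)∂x − (x/2)[f'(t)(v∂u − u∂v) + f''(t)∂w]`. -/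
def Yf (f : ℝ → ℝ) : R7 → R7 := fun p =>
  ![0, f (p 0), 0, 0,
    -(p 1 / 2) * (deriv f (p 0) * p 5),
    (p 1 / 2) * (deriv f (p 0) * p 4),
    -(p 1 / 2) * deriv (deriv f) (p 0)]

/-- `Z(f) = f(t)∂y − (y/(2a₁))[f'(t)(v∂u − u∂v) + f''(t)∂w]`. -/
def Zf (a₁ : ℝ) (f : ℝ → ℝ) : R7 → R7 := fun p =>
  ![0, 0, f (p 0), 0,
    -(p 2 / (2 * a₁)) * (deriv f (p 0) * p 5),
    (p 2 / (2 * a₁)) * (deriv f (p 0) * p 4),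
    -(p 2 / (2 * a₁)) * deriv (deriv f) (p 0)]

/-- `Q(f) = f(t)∂z − (z/2)[f'(t)(v∂u − u∂v) + f''(t)∂w]`. -/
def Qf (f : ℝ → ℝ) : R7 → R7 := fun p =>
  ![0, 0, 0, f (p 0),
    -(p 3 / 2) * (deriv f (p 0) * p 5),
    (p 3 / 2) * (deriv f (p 0) * p 4),
    -(p 3 / 2) * deriv (deriv f) (p 0)]

/-- `W(f) = f(t)(v∂u − u∂v) + f'(t)∂w`. -/
def Wf (f : ℝ → ℝ) : R7 → R7 := fun p =>
  ![0, 0, 0, 0, f (p 0) * p 5, -(f (p 0) * p 4), deriv f (p 0)]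


open ContinuousLinearMap

abbrev pr (i : Fin 7) : R7 →L[ℝ] ℝ := proj i

lemma pr_hasF (i : Fin 7) (p : R7) : HasFDerivAt (fun q : R7 => q i) (pr i) p :=
  (pr i).hasFDerivAt

lemma comp_hasF (g : ℝ → ℝ) (p : R7) (hg : DifferentiableAt ℝ g (p 0)) :
    HasFDerivAt (fun q : R7 => g (q 0)) (deriv g (p 0) • pr 0) p :=
  hg.hasDerivAt.comp_hasFDerivAt p (pr_hasF 0 p)

lemma half_hasF (p : R7) :
    HasFDerivAt (fun q : R7 => q 3 / 2) ((2:ℝ)⁻¹ • pr 3) p := by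
  have := (pr_hasF 3 p).const_smul ((2:ℝ)⁻¹)
  have e : (fun q : R7 => q 3 / 2) = (2:ℝ)⁻¹ • fun q : R7 => q 3 := by
    funext q
    simp only [Pi.smul_apply, smul_eq_mul]
    ring
  rw [e]
  exact this

def Qcomp (f : ℝ → ℝ) : Fin 7 → (R7 → ℝ) :=
  ![fun _ => 0, fun _ => 0, fun _ => 0, fun q => f (q 0),
    fun q => -(q 3 / 2) * (deriv f (q 0) * q 5),
    fun q => (q 3 / 2) * (deriv f (q 0) * q 4),
    fun q => -(q 3 / 2) * deriv (deriv f) (q 0)]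

lemma qf_eq (f : ℝ → ℝ) : Qf f = fun q i => Qcomp f i q := by
  funext q i
  fin_cases i <;> rfl

lemma vec7_five {α : Type*} (a b c d e f g : α) : ![a,b,c,d,e,f,g] (5 : Fin 7) = f := rfl
lemma vec7_six {α : Type*} (a b c d e f g : α) : ![a,b,c,d,e,f,g] (6 : Fin 7) = g := rfl

lemma qf_fderiv_apply (f : ℝ → ℝ) (hf : ContDiff ℝ (⊤:ℕ∞) f) (p v : R7) (hv : v 0 = 0) :
    fderiv ℝ (Qf f) p v = ![0, 0, 0, 0,
      -(v 3 / 2) * (deriv f (p 0) * p 5) - (p 3 / 2) * (deriv f (p 0) * v 5),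
      (v 3 / 2) * (deriv f (p 0) * p 4) + (p 3 / 2) * (deriv f (p 0) * v 4),
      -(v 3 / 2) * deriv (deriv f) (p 0)] := by
  have hd1 : DifferentiableAt ℝ (deriv f) (p 0) :=
    ((hf.iterate_deriv 1).differentiable (by norm_num)).differentiableAt
  have hd2 : DifferentiableAt ℝ (deriv (deriv f)) (p 0) :=
    ((hf.iterate_deriv 2).differentiable (by norm_num)).differentiableAt
  have hd0 : DifferentiableAt ℝ f (p 0) :=
    (hf.differentiable (by norm_num)).differentiableAt
  have h3 := comp_hasF f p hd0
  have h4 := ((half_hasF p).neg.mul ((comp_hasF (deriv f) p hd1).mul (pr_hasF 5 p)))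
  have h5 := ((half_hasF p).mul ((comp_hasF (deriv f) p hd1).mul (pr_hasF 4 p)))
  have h6 := ((half_hasF p).neg.mul (comp_hasF (deriv (deriv f)) p hd2))
  have hdiff : ∀ i, DifferentiableAt ℝ (Qcomp f i) p := by
    intro i
    fin_cases i
    · exact differentiableAt_const 0
    · exact differentiableAt_const 0
    · exact differentiableAt_const 0
    · exact h3.differentiableAt
    · exact h4.differentiableAt
    · exact h5.differentiableAt
    · exact h6.differentiableAt
  rw [qf_eq, fderiv_pi hdiff]
  funext i
  fin_cases i <;> simp only [pi_apply]
  · simp [Qcomp]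
  · simp [Qcomp]
  · simp [Qcomp]
  · erw [h3.fderiv]; simp [hv, Matrix.cons_val_succ]
  · erw [h4.fderiv]; simp [hv, Matrix.cons_val_succ]; ring
  · erw [h5.fderiv]; simp [hv, Matrix.cons_val_succ, vec7_five]; ring
  · erw [h6.fderiv]; simp [hv, Matrix.cons_val_succ, vec7_six]; ring

theorem stmt6 (a₁ : ℝ) (ha₁ : a₁ ≠ 0) (k₁ k₂ : ℝ → ℝ)
    (hk₁ : ContDiff ℝ (⊤ : ℕ∞) k₁) (hk₂ : ContDiff ℝ (⊤ : ℕ∞) k₂) :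
    bracket (Qf k₁) (Qf k₂) = Wf (fun t => (deriv k₁ t * k₂ t - k₁ t * deriv k₂ t) / 2) := by
  funext p
  have h1 := qf_fderiv_apply k₂ hk₂ p (Qf k₁ p) (by simp [Qf])
  have h2 := qf_fderiv_apply k₁ hk₁ p (Qf k₂ p) (by simp [Qf])
  have d1 : DifferentiableAt ℝ k₁ (p 0) := (hk₁.differentiable (by norm_num)).differentiableAt
  have d2 : DifferentiableAt ℝ k₂ (p 0) := (hk₂.differentiable (by norm_num)).differentiableAt
  have d1' : DifferentiableAt ℝ (deriv k₁) (p 0) :=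
    ((hk₁.iterate_deriv 1).differentiable (by norm_num)).differentiableAt
  have d2' : DifferentiableAt ℝ (deriv k₂) (p 0) :=
    ((hk₂.iterate_deriv 1).differentiable (by norm_num)).differentiableAt
  have hg : deriv (fun t => (deriv k₁ t * k₂ t - k₁ t * deriv k₂ t) / 2) (p 0)
      = (deriv (deriv k₁) (p 0) * k₂ (p 0) - k₁ (p 0) * deriv (deriv k₂) (p 0)) / 2 := by
    rw [deriv_div_const, deriv_fun_sub (f := fun t => deriv k₁ t * k₂ t) (g := fun t => k₁ t * deriv k₂ t) (d1'.mul d2) (d1.mul d2'), deriv_fun_mul d1' d2, deriv_fun_mul d1 d2']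
    ring
  show fderiv ℝ (Qf k₂) p (Qf k₁ p) - fderiv ℝ (Qf k₁) p (Qf k₂ p) = _
  rw [h1, h2]
  funext i
  fin_cases i <;>
    simp [Qf, Wf, hg, Matrix.cons_val_succ, vec7_five, vec7_six, Pi.sub_apply] <;> ring

end
end

section
/- Let a₁ be a nonzero real constant, and let N be the set of vector fields on ℝ⁷ of the form Y(g) + Z(h) + Q(k) + W(m) with g, h, k, m : ℝ → ℝ smooth. Then N is an ideal of Kac–Moody type which is nilpotent of class at most 2: (i) for any V of the form c₁X₁ + c₂X₂ + c₃X₃ + Y(g₀) + Z(h₀) + Q(k₀) + W(m₀) (c_i ∈ ℝ, g₀, h₀, k₀, m₀ smooth) and any N₁ ∈ N, the bracket [V, N₁] belongs to N; (ii) for any N₁, N₂ ∈ N, there exists a smooth m : ℝ → ℝ with [N₁, N₂] = W(m); and (iii) for any N₁, N₂, N₃ ∈ N, [[N₁, N₂], N₃] = 0. -/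
noncomputable section

/-- Membership in the full symmetry algebra
`L = {c₁X₁ + c₂X₂ + c₃X₃ + Y(g) + Z(h) + Q(k) + W(m)}`. -/
def memL (a₁ : ℝ) (V : R7 → R7) : Prop :=
  ∃ (c₁ c₂ c₃ : ℝ) (g h k m : ℝ → ℝ),
    ContDiff ℝ (⊤ : ℕ∞) g ∧ ContDiff ℝ (⊤ : ℕ∞) h ∧ ContDiff ℝ (⊤ : ℕ∞) k ∧ ContDiff ℝ (⊤ : ℕ∞) m ∧
    V = c₁ • X1 + c₂ • X2 + c₃ • X3 + Yf g + Zf a₁ h + Qf k + Wf m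

/-- Membership in the Kac–Moody ideal `N = {Y(g) + Z(h) + Q(k) + W(m)}`. -/
def memN (a₁ : ℝ) (V : R7 → R7) : Prop :=
  ∃ (g h k m : ℝ → ℝ),
    ContDiff ℝ (⊤ : ℕ∞) g ∧ ContDiff ℝ (⊤ : ℕ∞) h ∧ ContDiff ℝ (⊤ : ℕ∞) k ∧ ContDiff ℝ (⊤ : ℕ∞) m ∧
    V = Yf g + Zf a₁ h + Qf k + Wf m

/-! ### Auxiliary machinery -/

section Aux

lemma sm_deriv {f : ℝ → ℝ} (hf : ContDiff ℝ (⊤:ℕ∞) f) : ContDiff ℝ (⊤:ℕ∞) (deriv f) :=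
  (contDiff_infty_iff_deriv.mp hf).2

lemma sm_diff {f : ℝ → ℝ} (hf : ContDiff ℝ (⊤:ℕ∞) f) : Differentiable ℝ f :=
  hf.differentiable (by simp)

lemma hasF_coord (p : R7) (i : Fin 7) :
    HasFDerivAt (fun q : R7 => q i)
      (ContinuousLinearMap.proj (R := ℝ) (φ := fun _ : Fin 7 => ℝ) i) p :=
  (ContinuousLinearMap.proj (R := ℝ) (φ := fun _ : Fin 7 => ℝ) i).hasFDerivAt

@[simp] lemma fderiv_coord_apply (p v : R7) (i : Fin 7) :
    fderiv ℝ (fun q : R7 => q i) p v = v i := by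
  rw [(hasF_coord p i).fderiv]; simp

@[simp] lemma fderiv_coord_div_apply (p v : R7) (i : Fin 7) (c : ℝ) :
    fderiv ℝ (fun q : R7 => q i / c) p v = v i / c := by
  simp only [div_eq_mul_inv]
  rw [((hasF_coord p i).mul_const c⁻¹).fderiv]
  simp [mul_comm]

lemma fderiv_comp0_apply (f : ℝ → ℝ) (p v : R7) (hf : DifferentiableAt ℝ f (p 0)) :
    fderiv ℝ (fun q : R7 => f (q 0)) p v = deriv f (p 0) * v 0 := by
  have h2 := (hf.hasDerivAt).comp_hasFDerivAt p (hasF_coord p 0)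
  rw [show (fun q : R7 => f (q 0)) = f ∘ (fun q => q 0) from rfl, h2.fderiv]; simp

@[simp] lemma X1_ap0 (p : R7) : X1 p 0 = (1:ℝ) := rfl
@[simp] lemma X1_apm0 (p : R7) : X1 p ⟨0, by omega⟩ = (1:ℝ) := rfl
@[simp] lemma X1_ap1 (p : R7) : X1 p 1 = (0:ℝ) := rfl
@[simp] lemma X1_apm1 (p : R7) : X1 p ⟨1, by omega⟩ = (0:ℝ) := rfl
@[simp] lemma X1_ap2 (p : R7) : X1 p 2 = (0:ℝ) := rfl
@[simp] lemma X1_apm2 (p : R7) : X1 p ⟨2, by omega⟩ = (0:ℝ) := rfl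
@[simp] lemma X1_ap3 (p : R7) : X1 p 3 = (0:ℝ) := rfl
@[simp] lemma X1_apm3 (p : R7) : X1 p ⟨3, by omega⟩ = (0:ℝ) := rfl
@[simp] lemma X1_ap4 (p : R7) : X1 p 4 = (0:ℝ) := rfl
@[simp] lemma X1_apm4 (p : R7) : X1 p ⟨4, by omega⟩ = (0:ℝ) := rfl
@[simp] lemma X1_ap5 (p : R7) : X1 p 5 = (0:ℝ) := rfl
@[simp] lemma X1_apm5 (p : R7) : X1 p ⟨5, by omega⟩ = (0:ℝ) := rfl
@[simp] lemma X1_ap6 (p : R7) : X1 p 6 = (0:ℝ) := rfl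
@[simp] lemma X1_apm6 (p : R7) : X1 p ⟨6, by omega⟩ = (0:ℝ) := rfl
@[simp] lemma X2_ap0 (p : R7) : X2 p 0 = 2 * p 0 := rfl
@[simp] lemma X2_apm0 (p : R7) : X2 p ⟨0, by omega⟩ = 2 * p 0 := rfl
@[simp] lemma X2_ap1 (p : R7) : X2 p 1 = p 1 := rfl
@[simp] lemma X2_apm1 (p : R7) : X2 p ⟨1, by omega⟩ = p 1 := rfl
@[simp] lemma X2_ap2 (p : R7) : X2 p 2 = p 2 := rfl
@[simp] lemma X2_apm2 (p : R7) : X2 p ⟨2, by omega⟩ = p 2 := rfl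
@[simp] lemma X2_ap3 (p : R7) : X2 p 3 = p 3 := rfl
@[simp] lemma X2_apm3 (p : R7) : X2 p ⟨3, by omega⟩ = p 3 := rfl
@[simp] lemma X2_ap4 (p : R7) : X2 p 4 = -p 4 := rfl
@[simp] lemma X2_apm4 (p : R7) : X2 p ⟨4, by omega⟩ = -p 4 := rfl
@[simp] lemma X2_ap5 (p : R7) : X2 p 5 = -p 5 := rfl
@[simp] lemma X2_apm5 (p : R7) : X2 p ⟨5, by omega⟩ = -p 5 := rfl
@[simp] lemma X2_ap6 (p : R7) : X2 p 6 = -2 * p 6 := rfl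
@[simp] lemma X2_apm6 (p : R7) : X2 p ⟨6, by omega⟩ = -2 * p 6 := rfl
@[simp] lemma X3_ap0 (p : R7) : X3 p 0 = (0:ℝ) := rfl
@[simp] lemma X3_apm0 (p : R7) : X3 p ⟨0, by omega⟩ = (0:ℝ) := rfl
@[simp] lemma X3_ap1 (p : R7) : X3 p 1 = p 3 := rfl
@[simp] lemma X3_apm1 (p : R7) : X3 p ⟨1, by omega⟩ = p 3 := rfl
@[simp] lemma X3_ap2 (p : R7) : X3 p 2 = (0:ℝ) := rfl
@[simp] lemma X3_apm2 (p : R7) : X3 p ⟨2, by omega⟩ = (0:ℝ) := rfl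
@[simp] lemma X3_ap3 (p : R7) : X3 p 3 = -p 1 := rfl
@[simp] lemma X3_apm3 (p : R7) : X3 p ⟨3, by omega⟩ = -p 1 := rfl
@[simp] lemma X3_ap4 (p : R7) : X3 p 4 = (0:ℝ) := rfl
@[simp] lemma X3_apm4 (p : R7) : X3 p ⟨4, by omega⟩ = (0:ℝ) := rfl
@[simp] lemma X3_ap5 (p : R7) : X3 p 5 = (0:ℝ) := rfl
@[simp] lemma X3_apm5 (p : R7) : X3 p ⟨5, by omega⟩ = (0:ℝ) := rfl
@[simp] lemma X3_ap6 (p : R7) : X3 p 6 = (0:ℝ) := rfl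
@[simp] lemma X3_apm6 (p : R7) : X3 p ⟨6, by omega⟩ = (0:ℝ) := rfl
@[simp] lemma Yf_ap0 (f : ℝ → ℝ) (p : R7) : Yf f p 0 = (0:ℝ) := rfl
@[simp] lemma Yf_apm0 (f : ℝ → ℝ) (p : R7) : Yf f p ⟨0, by omega⟩ = (0:ℝ) := rfl
@[simp] lemma Yf_ap1 (f : ℝ → ℝ) (p : R7) : Yf f p 1 = f (p 0) := rfl
@[simp] lemma Yf_apm1 (f : ℝ → ℝ) (p : R7) : Yf f p ⟨1, by omega⟩ = f (p 0) := rfl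
@[simp] lemma Yf_ap2 (f : ℝ → ℝ) (p : R7) : Yf f p 2 = (0:ℝ) := rfl
@[simp] lemma Yf_apm2 (f : ℝ → ℝ) (p : R7) : Yf f p ⟨2, by omega⟩ = (0:ℝ) := rfl
@[simp] lemma Yf_ap3 (f : ℝ → ℝ) (p : R7) : Yf f p 3 = (0:ℝ) := rfl
@[simp] lemma Yf_apm3 (f : ℝ → ℝ) (p : R7) : Yf f p ⟨3, by omega⟩ = (0:ℝ) := rfl
@[simp] lemma Yf_ap4 (f : ℝ → ℝ) (p : R7) : Yf f p 4 = -(p 1 / 2) * (deriv f (p 0) * p 5) := rfl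
@[simp] lemma Yf_apm4 (f : ℝ → ℝ) (p : R7) : Yf f p ⟨4, by omega⟩ = -(p 1 / 2) * (deriv f (p 0) * p 5) := rfl
@[simp] lemma Yf_ap5 (f : ℝ → ℝ) (p : R7) : Yf f p 5 = (p 1 / 2) * (deriv f (p 0) * p 4) := rfl
@[simp] lemma Yf_apm5 (f : ℝ → ℝ) (p : R7) : Yf f p ⟨5, by omega⟩ = (p 1 / 2) * (deriv f (p 0) * p 4) := rfl
@[simp] lemma Yf_ap6 (f : ℝ → ℝ) (p : R7) : Yf f p 6 = -(p 1 / 2) * deriv (deriv f) (p 0) := rfl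
@[simp] lemma Yf_apm6 (f : ℝ → ℝ) (p : R7) : Yf f p ⟨6, by omega⟩ = -(p 1 / 2) * deriv (deriv f) (p 0) := rfl
@[simp] lemma Zf_ap0 (a₁ : ℝ) (f : ℝ → ℝ) (p : R7) : Zf a₁ f p 0 = (0:ℝ) := rfl
@[simp] lemma Zf_apm0 (a₁ : ℝ) (f : ℝ → ℝ) (p : R7) : Zf a₁ f p ⟨0, by omega⟩ = (0:ℝ) := rfl
@[simp] lemma Zf_ap1 (a₁ : ℝ) (f : ℝ → ℝ) (p : R7) : Zf a₁ f p 1 = (0:ℝ) := rfl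
@[simp] lemma Zf_apm1 (a₁ : ℝ) (f : ℝ → ℝ) (p : R7) : Zf a₁ f p ⟨1, by omega⟩ = (0:ℝ) := rfl
@[simp] lemma Zf_ap2 (a₁ : ℝ) (f : ℝ → ℝ) (p : R7) : Zf a₁ f p 2 = f (p 0) := rfl
@[simp] lemma Zf_apm2 (a₁ : ℝ) (f : ℝ → ℝ) (p : R7) : Zf a₁ f p ⟨2, by omega⟩ = f (p 0) := rfl
@[simp] lemma Zf_ap3 (a₁ : ℝ) (f : ℝ → ℝ) (p : R7) : Zf a₁ f p 3 = (0:ℝ) := rfl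
@[simp] lemma Zf_apm3 (a₁ : ℝ) (f : ℝ → ℝ) (p : R7) : Zf a₁ f p ⟨3, by omega⟩ = (0:ℝ) := rfl
@[simp] lemma Zf_ap4 (a₁ : ℝ) (f : ℝ → ℝ) (p : R7) : Zf a₁ f p 4 = -(p 2 / (2 * a₁)) * (deriv f (p 0) * p 5) := rfl
@[simp] lemma Zf_apm4 (a₁ : ℝ) (f : ℝ → ℝ) (p : R7) : Zf a₁ f p ⟨4, by omega⟩ = -(p 2 / (2 * a₁)) * (deriv f (p 0) * p 5) := rfl
@[simp] lemma Zf_ap5 (a₁ : ℝ) (f : ℝ → ℝ) (p : R7) : Zf a₁ f p 5 = (p 2 / (2 * a₁)) * (deriv f (p 0) * p 4) := rfl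
@[simp] lemma Zf_apm5 (a₁ : ℝ) (f : ℝ → ℝ) (p : R7) : Zf a₁ f p ⟨5, by omega⟩ = (p 2 / (2 * a₁)) * (deriv f (p 0) * p 4) := rfl
@[simp] lemma Zf_ap6 (a₁ : ℝ) (f : ℝ → ℝ) (p : R7) : Zf a₁ f p 6 = -(p 2 / (2 * a₁)) * deriv (deriv f) (p 0) := rfl
@[simp] lemma Zf_apm6 (a₁ : ℝ) (f : ℝ → ℝ) (p : R7) : Zf a₁ f p ⟨6, by omega⟩ = -(p 2 / (2 * a₁)) * deriv (deriv f) (p 0) := rfl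
@[simp] lemma Qf_ap0 (f : ℝ → ℝ) (p : R7) : Qf f p 0 = (0:ℝ) := rfl
@[simp] lemma Qf_apm0 (f : ℝ → ℝ) (p : R7) : Qf f p ⟨0, by omega⟩ = (0:ℝ) := rfl
@[simp] lemma Qf_ap1 (f : ℝ → ℝ) (p : R7) : Qf f p 1 = (0:ℝ) := rfl
@[simp] lemma Qf_apm1 (f : ℝ → ℝ) (p : R7) : Qf f p ⟨1, by omega⟩ = (0:ℝ) := rfl
@[simp] lemma Qf_ap2 (f : ℝ → ℝ) (p : R7) : Qf f p 2 = (0:ℝ) := rfl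
@[simp] lemma Qf_apm2 (f : ℝ → ℝ) (p : R7) : Qf f p ⟨2, by omega⟩ = (0:ℝ) := rfl
@[simp] lemma Qf_ap3 (f : ℝ → ℝ) (p : R7) : Qf f p 3 = f (p 0) := rfl
@[simp] lemma Qf_apm3 (f : ℝ → ℝ) (p : R7) : Qf f p ⟨3, by omega⟩ = f (p 0) := rfl
@[simp] lemma Qf_ap4 (f : ℝ → ℝ) (p : R7) : Qf f p 4 = -(p 3 / 2) * (deriv f (p 0) * p 5) := rfl
@[simp] lemma Qf_apm4 (f : ℝ → ℝ) (p : R7) : Qf f p ⟨4, by omega⟩ = -(p 3 / 2) * (deriv f (p 0) * p 5) := rfl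
@[simp] lemma Qf_ap5 (f : ℝ → ℝ) (p : R7) : Qf f p 5 = (p 3 / 2) * (deriv f (p 0) * p 4) := rfl
@[simp] lemma Qf_apm5 (f : ℝ → ℝ) (p : R7) : Qf f p ⟨5, by omega⟩ = (p 3 / 2) * (deriv f (p 0) * p 4) := rfl
@[simp] lemma Qf_ap6 (f : ℝ → ℝ) (p : R7) : Qf f p 6 = -(p 3 / 2) * deriv (deriv f) (p 0) := rfl
@[simp] lemma Qf_apm6 (f : ℝ → ℝ) (p : R7) : Qf f p ⟨6, by omega⟩ = -(p 3 / 2) * deriv (deriv f) (p 0) := rfl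
@[simp] lemma Wf_ap0 (f : ℝ → ℝ) (p : R7) : Wf f p 0 = (0:ℝ) := rfl
@[simp] lemma Wf_apm0 (f : ℝ → ℝ) (p : R7) : Wf f p ⟨0, by omega⟩ = (0:ℝ) := rfl
@[simp] lemma Wf_ap1 (f : ℝ → ℝ) (p : R7) : Wf f p 1 = (0:ℝ) := rfl
@[simp] lemma Wf_apm1 (f : ℝ → ℝ) (p : R7) : Wf f p ⟨1, by omega⟩ = (0:ℝ) := rfl
@[simp] lemma Wf_ap2 (f : ℝ → ℝ) (p : R7) : Wf f p 2 = (0:ℝ) := rfl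
@[simp] lemma Wf_apm2 (f : ℝ → ℝ) (p : R7) : Wf f p ⟨2, by omega⟩ = (0:ℝ) := rfl
@[simp] lemma Wf_ap3 (f : ℝ → ℝ) (p : R7) : Wf f p 3 = (0:ℝ) := rfl
@[simp] lemma Wf_apm3 (f : ℝ → ℝ) (p : R7) : Wf f p ⟨3, by omega⟩ = (0:ℝ) := rfl
@[simp] lemma Wf_ap4 (f : ℝ → ℝ) (p : R7) : Wf f p 4 = f (p 0) * p 5 := rfl
@[simp] lemma Wf_apm4 (f : ℝ → ℝ) (p : R7) : Wf f p ⟨4, by omega⟩ = f (p 0) * p 5 := rfl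
@[simp] lemma Wf_ap5 (f : ℝ → ℝ) (p : R7) : Wf f p 5 = -(f (p 0) * p 4) := rfl
@[simp] lemma Wf_apm5 (f : ℝ → ℝ) (p : R7) : Wf f p ⟨5, by omega⟩ = -(f (p 0) * p 4) := rfl
@[simp] lemma Wf_ap6 (f : ℝ → ℝ) (p : R7) : Wf f p 6 = deriv f (p 0) := rfl
@[simp] lemma Wf_apm6 (f : ℝ → ℝ) (p : R7) : Wf f p ⟨6, by omega⟩ = deriv f (p 0) := rfl



lemma bracket_apply (A B : R7 → R7) (hA : ∀ i, Differentiable ℝ (fun q => A q i))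
    (hB : ∀ i, Differentiable ℝ (fun q => B q i)) (p : R7) (i : Fin 7) :
    bracket A B p i
      = fderiv ℝ (fun q => B q i) p (A p) - fderiv ℝ (fun q => A q i) p (B p) := by
  show (fderiv ℝ B p (A p) - fderiv ℝ A p (B p)) i = _
  rw [fderiv_pi (fun j => (hB j) p), fderiv_pi (fun j => (hA j) p)]
  simp

end Aux

section Master

@[simp] lemma deriv_hmul (c t : ℝ) : deriv (HMul.hMul c) t = c := by
  simpa using ((hasDerivAt_id t).const_mul c).deriv

set_option maxHeartbeats 2000000


variable (a₁ c₁ c₂ c₃ : ℝ)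

/-- The master bracket computation. -/
lemma master (g₀ h₀ k₀ m₀ g h k m : ℝ → ℝ)
    (hg₀ : ContDiff ℝ (⊤:ℕ∞) g₀) (hh₀ : ContDiff ℝ (⊤:ℕ∞) h₀)
    (hk₀ : ContDiff ℝ (⊤:ℕ∞) k₀) (hm₀ : ContDiff ℝ (⊤:ℕ∞) m₀)
    (hg : ContDiff ℝ (⊤:ℕ∞) g) (hh : ContDiff ℝ (⊤:ℕ∞) h)
    (hk : ContDiff ℝ (⊤:ℕ∞) k) (hm : ContDiff ℝ (⊤:ℕ∞) m) :
    bracket (c₁ • X1 + c₂ • X2 + c₃ • X3 + Yf g₀ + Zf a₁ h₀ + Qf k₀ + Wf m₀)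
        (Yf g + Zf a₁ h + Qf k + Wf m)
      = Yf (fun t => c₁ * deriv g t + c₂ * (2*t*deriv g t - g t) - c₃ * k t)
        + Zf a₁ (fun t => c₁ * deriv h t + c₂ * (2*t*deriv h t - h t))
        + Qf (fun t => c₁ * deriv k t + c₂ * (2*t*deriv k t - k t) + c₃ * g t)
        + Wf (fun t => c₁ * deriv m t + c₂ * (2*t*deriv m t)
            - (1/2) * (g₀ t * deriv g t - deriv g₀ t * g t)
            - (1/(2*a₁)) * (h₀ t * deriv h t - deriv h₀ t * h t)
            - (1/2) * (k₀ t * deriv k t - deriv k₀ t * k t)) := by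
  have Dg₀ : Differentiable ℝ g₀ := sm_diff hg₀
  have Dg₀' : Differentiable ℝ (deriv g₀) := sm_diff (sm_deriv hg₀)
  have Dg₀'' : Differentiable ℝ (deriv (deriv g₀)) := sm_diff (sm_deriv (sm_deriv hg₀))
  have Dh₀ : Differentiable ℝ h₀ := sm_diff hh₀
  have Dh₀' : Differentiable ℝ (deriv h₀) := sm_diff (sm_deriv hh₀)
  have Dh₀'' : Differentiable ℝ (deriv (deriv h₀)) := sm_diff (sm_deriv (sm_deriv hh₀))
  have Dk₀ : Differentiable ℝ k₀ := sm_diff hk₀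
  have Dk₀' : Differentiable ℝ (deriv k₀) := sm_diff (sm_deriv hk₀)
  have Dk₀'' : Differentiable ℝ (deriv (deriv k₀)) := sm_diff (sm_deriv (sm_deriv hk₀))
  have Dm₀ : Differentiable ℝ m₀ := sm_diff hm₀
  have Dm₀' : Differentiable ℝ (deriv m₀) := sm_diff (sm_deriv hm₀)
  have Dm₀'' : Differentiable ℝ (deriv (deriv m₀)) := sm_diff (sm_deriv (sm_deriv hm₀))
  have Dg : Differentiable ℝ g := sm_diff hg
  have Dg' : Differentiable ℝ (deriv g) := sm_diff (sm_deriv hg)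
  have Dg'' : Differentiable ℝ (deriv (deriv g)) := sm_diff (sm_deriv (sm_deriv hg))
  have Dh : Differentiable ℝ h := sm_diff hh
  have Dh' : Differentiable ℝ (deriv h) := sm_diff (sm_deriv hh)
  have Dh'' : Differentiable ℝ (deriv (deriv h)) := sm_diff (sm_deriv (sm_deriv hh))
  have Dk : Differentiable ℝ k := sm_diff hk
  have Dk' : Differentiable ℝ (deriv k) := sm_diff (sm_deriv hk)
  have Dk'' : Differentiable ℝ (deriv (deriv k)) := sm_diff (sm_deriv (sm_deriv hk))
  have Dm : Differentiable ℝ m := sm_diff hm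
  have Dm' : Differentiable ℝ (deriv m) := sm_diff (sm_deriv hm)
  have Dm'' : Differentiable ℝ (deriv (deriv m)) := sm_diff (sm_deriv (sm_deriv hm))
  have hA : ∀ i, Differentiable ℝ
      (fun q => (c₁ • X1 + c₂ • X2 + c₃ • X3 + Yf g₀ + Zf a₁ h₀ + Qf k₀ + Wf m₀) q i) := by
    intro i; fin_cases i <;>
      (simp only [Pi.add_apply, Pi.smul_apply, smul_eq_mul,
        X1_ap0, X1_apm0, X1_ap1, X1_apm1, X1_ap2, X1_apm2, X1_ap3, X1_apm3, X1_ap4, X1_apm4, X1_ap5, X1_apm5, X1_ap6, X1_apm6, X2_ap0, X2_apm0, X2_ap1, X2_apm1, X2_ap2, X2_apm2, X2_ap3, X2_apm3, X2_ap4, X2_apm4, X2_ap5, X2_apm5, X2_ap6, X2_apm6, X3_ap0, X3_apm0, X3_ap1, X3_apm1, X3_ap2, X3_apm2, X3_ap3, X3_apm3, X3_ap4, X3_apm4, X3_ap5, X3_apm5, X3_ap6, X3_apm6, X1_ap0, X1_apm0, X1_ap1, X1_apm1, X1_ap2, X1_apm2, X1_ap3, X1_apm3, X1_ap4, X1_apm4,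 X1_ap5, X1_apm5, X1_ap6, X1_apm6, X2_ap0, X2_apm0, X2_ap1, X2_apm1, X2_ap2, X2_apm2, X2_ap3, X2_apm3, X2_ap4, X2_apm4, X2_ap5, X2_apm5, X2_ap6, X2_apm6, X3_ap0, X3_apm0, X3_ap1, X3_apm1, X3_ap2, X3_apm2, X3_ap3, X3_apm3, X3_ap4, X3_apm4, X3_ap5, X3_apm5, X3_ap6, X3_apm6, Yf_ap0, Yf_apm0, Yf_ap1, Yf_apm1, Yf_ap2, Yf_apm2, Yf_ap3, Yf_apm3, Yf_ap4, Yf_apm4, Yf_ap5, Yf_apm5, Yf_ap6, Yf_apm6, Zf_ap0, Zf_apm0, Zf_ap1, Zf_apm1, Zf_ap2, Zf_apm2, Zf_ap3, Zf_apm3, Zf_ap4, Zf_apm4, Zf_ap5, Zf_apm5, Zf_ap6, Zf_apm6, Qf_ap0, Qf_apm0, Qf_ap1, Qf_apm1, Qf_ap2, Qf_apm2, Qf_ap3, Qf_apm3, Qf_ap4, Qf_apm4, Qf_ap5, Qf_apm5, Qf_ap6, Qf_apm6, Wf_ap0, Wf_apm0, Wf_ap1, Wf_apm1, Wf_ap2,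 Wf_apm2, Wf_ap3, Wf_apm3, Wf_ap4, Wf_apm4, Wf_ap5, Wf_apm5, Wf_ap6, Wf_apm6, Wf_apm6] <;> fun_prop)
  have hB : ∀ i, Differentiable ℝ (fun q => (Yf g + Zf a₁ h + Qf k + Wf m) q i) := by
    intro i; fin_cases i <;>
      (simp only [Pi.add_apply,
        X1_ap0, X1_apm0, X1_ap1, X1_apm1, X1_ap2, X1_apm2, X1_ap3, X1_apm3, X1_ap4, X1_apm4, X1_ap5, X1_apm5, X1_ap6, X1_apm6, X2_ap0, X2_apm0, X2_ap1, X2_apm1, X2_ap2, X2_apm2, X2_ap3, X2_apm3, X2_ap4, X2_apm4, X2_ap5, X2_apm5, X2_ap6, X2_apm6, X3_ap0, X3_apm0, X3_ap1, X3_apm1, X3_ap2, X3_apm2, X3_ap3, X3_apm3, X3_ap4, X3_apm4, X3_ap5, X3_apm5, X3_ap6, X3_apm6, Yf_ap0, Yf_apm0, Yf_ap1, Yf_apm1, Yf_ap2, Yf_apm2, Yf_ap3, Yf_apm3, Yf_ap4, Yf_apm4, Yf_ap5, Yf_apm5, Yf_ap6, Yf_apm6, Zf_ap0, Zf_apm0,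 Zf_ap1, Zf_apm1, Zf_ap2, Zf_apm2, Zf_ap3, Zf_apm3, Zf_ap4, Zf_apm4, Zf_ap5, Zf_apm5, Zf_ap6, Zf_apm6, Qf_ap0, Qf_apm0, Qf_ap1, Qf_apm1, Qf_ap2, Qf_apm2, Qf_ap3, Qf_apm3, Qf_ap4, Qf_apm4, Qf_ap5, Qf_apm5, Qf_ap6, Qf_apm6, Wf_ap0, Wf_apm0, Wf_ap1, Wf_apm1, Wf_ap2, Wf_apm2, Wf_ap3, Wf_apm3, Wf_ap4, Wf_apm4, Wf_ap5, Wf_apm5, Wf_ap6, Wf_apm6] <;> fun_prop)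
  have hG' : deriv (fun t => c₁ * deriv g t + c₂ * (2*t*deriv g t - g t) - c₃ * k t)
      = fun t => c₁ * deriv (deriv g) t + c₂ * (deriv g t + 2*t*deriv (deriv g) t)
          - c₃ * deriv k t := by
    funext t
    simp (disch := fun_prop) only [deriv_fun_add, deriv_fun_sub, deriv_fun_mul, deriv_const_mul, deriv_id'', deriv_const', deriv_const_mul_field, deriv_hmul]
    ring
  have hG'' : deriv (fun t => c₁ * deriv (deriv g) t + c₂ * (deriv g t + 2*t*deriv (deriv g) t)
          - c₃ * deriv k t)
      = fun t => c₁ * deriv (deriv (deriv g)) t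
          + c₂ * (3 * deriv (deriv g) t + 2*t*deriv (deriv (deriv g)) t)
          - c₃ * deriv (deriv k) t := by
    funext t
    simp (disch := fun_prop) only [deriv_fun_add, deriv_fun_sub, deriv_fun_mul, deriv_const_mul, deriv_id'', deriv_const', deriv_const_mul_field, deriv_hmul]
    ring
  have hH' : deriv (fun t => c₁ * deriv h t + c₂ * (2*t*deriv h t - h t))
      = fun t => c₁ * deriv (deriv h) t + c₂ * (deriv h t + 2*t*deriv (deriv h) t) := by
    funext t
    simp (disch := fun_prop) only [deriv_fun_add, deriv_fun_sub, deriv_fun_mul, deriv_const_mul, deriv_id'', deriv_const', deriv_const_mul_field, deriv_hmul]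
    ring
  have hH'' : deriv (fun t => c₁ * deriv (deriv h) t + c₂ * (deriv h t + 2*t*deriv (deriv h) t))
      = fun t => c₁ * deriv (deriv (deriv h)) t
          + c₂ * (3 * deriv (deriv h) t + 2*t*deriv (deriv (deriv h)) t) := by
    funext t
    simp (disch := fun_prop) only [deriv_fun_add, deriv_fun_sub, deriv_fun_mul, deriv_const_mul, deriv_id'', deriv_const', deriv_const_mul_field, deriv_hmul]
    ring
  have hK' : deriv (fun t => c₁ * deriv k t + c₂ * (2*t*deriv k t - k t) + c₃ * g t)
      = fun t => c₁ * deriv (deriv k) t + c₂ * (deriv k t + 2*t*deriv (deriv k) t)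
          + c₃ * deriv g t := by
    funext t
    simp (disch := fun_prop) only [deriv_fun_add, deriv_fun_sub, deriv_fun_mul, deriv_const_mul, deriv_id'', deriv_const', deriv_const_mul_field, deriv_hmul]
    ring
  have hK'' : deriv (fun t => c₁ * deriv (deriv k) t + c₂ * (deriv k t + 2*t*deriv (deriv k) t)
          + c₃ * deriv g t)
      = fun t => c₁ * deriv (deriv (deriv k)) t
          + c₂ * (3 * deriv (deriv k) t + 2*t*deriv (deriv (deriv k)) t)
          + c₃ * deriv (deriv g) t := by
    funext t
    simp (disch := fun_prop) only [deriv_fun_add, deriv_fun_sub, deriv_fun_mul, deriv_const_mul, deriv_id'', deriv_const', deriv_const_mul_field, deriv_hmul]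
    ring
  have hM' : deriv (fun t => c₁ * deriv m t + c₂ * (2*t*deriv m t)
        - (1/2) * (g₀ t * deriv g t - deriv g₀ t * g t)
        - (1/(2*a₁)) * (h₀ t * deriv h t - deriv h₀ t * h t)
        - (1/2) * (k₀ t * deriv k t - deriv k₀ t * k t))
      = fun t => c₁ * deriv (deriv m) t + c₂ * (2*deriv m t + 2*t*deriv (deriv m) t)
        - (1/2) * (g₀ t * deriv (deriv g) t - deriv (deriv g₀) t * g t)
        - (1/(2*a₁)) * (h₀ t * deriv (deriv h) t - deriv (deriv h₀) t * h t)
        - (1/2) * (k₀ t * deriv (deriv k) t - deriv (deriv k₀) t * k t) := by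
    funext t
    simp (disch := fun_prop) only [deriv_fun_add, deriv_fun_sub, deriv_fun_mul, deriv_const_mul, deriv_id'', deriv_const', deriv_const_mul_field, deriv_hmul]
    ring
  funext p i
  rw [bracket_apply _ _ hA hB]
  fin_cases i <;>
    (simp (disch := fun_prop) only [Pi.add_apply, Pi.smul_apply, smul_eq_mul,
      X1_ap0, X1_apm0, X1_ap1, X1_apm1, X1_ap2, X1_apm2, X1_ap3, X1_apm3, X1_ap4, X1_apm4, X1_ap5, X1_apm5, X1_ap6, X1_apm6, X2_ap0, X2_apm0, X2_ap1, X2_apm1, X2_ap2, X2_apm2, X2_ap3, X2_apm3, X2_ap4, X2_apm4, X2_ap5, X2_apm5, X2_ap6, X2_apm6, X3_ap0, X3_apm0, X3_ap1, X3_apm1, X3_ap2, X3_apm2, X3_ap3, X3_apm3, X3_ap4, X3_apm4, X3_ap5, X3_apm5, X3_ap6, X3_apm6, X1_ap0, X1_apm0, X1_ap1, X1_apm1, X1_ap2, X1_apm2, X1_ap3, X1_apm3, X1_ap4, X1_apm4, X1_ap5, X1_apm5, X1_ap6, X1_apm6, X2_ap0, X2_apm0, X2_ap1, X2_apm1, X2_ap2,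 X2_apm2, X2_ap3, X2_apm3, X2_ap4, X2_apm4, X2_ap5, X2_apm5, X2_ap6, X2_apm6, X3_ap0, X3_apm0, X3_ap1, X3_apm1, X3_ap2, X3_apm2, X3_ap3, X3_apm3, X3_ap4, X3_apm4, X3_ap5, X3_apm5, X3_ap6, X3_apm6, Yf_ap0, Yf_apm0, Yf_ap1, Yf_apm1, Yf_ap2, Yf_apm2, Yf_ap3, Yf_apm3, Yf_ap4, Yf_apm4, Yf_ap5, Yf_apm5, Yf_ap6, Yf_apm6, Zf_ap0, Zf_apm0, Zf_ap1, Zf_apm1, Zf_ap2, Zf_apm2, Zf_ap3, Zf_apm3, Zf_ap4, Zf_apm4, Zf_ap5, Zf_apm5, Zf_ap6, Zf_apm6, Qf_ap0, Qf_apm0, Qf_ap1, Qf_apm1, Qf_ap2, Qf_apm2, Qf_ap3, Qf_apm3, Qf_ap4, Qf_apm4, Qf_ap5, Qf_apm5, Qf_ap6, Qf_apm6, Wf_ap0, Wf_apm0, Wf_ap1, Wf_apm1, Wf_ap2, Wf_apm2, Wf_ap3, Wf_apm3, Wf_ap4, Wf_apm4, Wf_ap5, Wf_apm5, Wf_ap6,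 Wf_apm6, Wf_apm6,
      hG', hG'', hH', hH'', hK', hK'', hM',
      mul_zero, zero_mul, mul_one, add_zero, zero_add, neg_zero,
      fderiv_fun_add, fderiv_fun_sub, fderiv_fun_neg, fderiv_fun_mul, fderiv_const_mul, fderiv_mul_const,
      fderiv_const, fderiv_const_apply, fderiv_coord_apply, fderiv_coord_div_apply, fderiv_comp0_apply,
      ContinuousLinearMap.add_apply, ContinuousLinearMap.sub_apply,
      ContinuousLinearMap.neg_apply, ContinuousLinearMap.smul_apply,
      ContinuousLinearMap.coe_smul', ContinuousLinearMap.coe_sub',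
      ContinuousLinearMap.zero_apply, Pi.sub_apply, Pi.smul_apply, Pi.neg_apply,
      Pi.zero_apply, smul_eq_mul]) <;>
    ring

end Master

section ZeroLemmas

variable (a₁ : ℝ)

lemma Yf_zero : Yf (fun _ => (0:ℝ)) = 0 := by
  funext p i
  fin_cases i <;> simp

lemma Zf_zero : Zf a₁ (fun _ => (0:ℝ)) = 0 := by
  funext p i
  fin_cases i <;> simp

lemma Qf_zero : Qf (fun _ => (0:ℝ)) = 0 := by
  funext p i
  fin_cases i <;> simp

lemma Wf_zero : Wf (fun _ => (0:ℝ)) = 0 := by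
  funext p i
  fin_cases i <;> simp

lemma padL (g h k m : ℝ → ℝ) :
    (0:ℝ) • X1 + (0:ℝ) • X2 + (0:ℝ) • X3 + Yf g + Zf a₁ h + Qf k + Wf m
      = Yf g + Zf a₁ h + Qf k + Wf m := by
  simp [zero_smul]

lemma WpadL (m : ℝ → ℝ) :
    Wf m = (0:ℝ) • X1 + (0:ℝ) • X2 + (0:ℝ) • X3 + Yf (fun _ => (0:ℝ))
      + Zf a₁ (fun _ => (0:ℝ)) + Qf (fun _ => (0:ℝ)) + Wf m := by
  rw [padL, Yf_zero, Zf_zero, Qf_zero]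
  simp

end ZeroLemmas

theorem stmt9 (a₁ : ℝ) (ha₁ : a₁ ≠ 0) :
    (∀ V N₁ : R7 → R7, memL a₁ V → memN a₁ N₁ → memN a₁ (bracket V N₁)) ∧
    (∀ N₁ N₂ : R7 → R7, memN a₁ N₁ → memN a₁ N₂ →
      ∃ m : ℝ → ℝ, ContDiff ℝ (⊤ : ℕ∞) m ∧ bracket N₁ N₂ = Wf m) ∧
    (∀ N₁ N₂ N₃ : R7 → R7, memN a₁ N₁ → memN a₁ N₂ → memN a₁ N₃ →
      bracket (bracket N₁ N₂) N₃ = 0) := by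
  have part2 : ∀ N₁ N₂ : R7 → R7, memN a₁ N₁ → memN a₁ N₂ →
      ∃ m : ℝ → ℝ, ContDiff ℝ (⊤ : ℕ∞) m ∧ bracket N₁ N₂ = Wf m := by
    intro N₁ N₂ h1 h2
    obtain ⟨g₁, h₁, k₁, m₁, hg₁, hh₁, hk₁, hm₁, rfl⟩ := h1
    obtain ⟨g₂, h₂, k₂, m₂, hg₂, hh₂, hk₂, hm₂, rfl⟩ := h2
    have hg₁' := sm_deriv hg₁; have hh₁' := sm_deriv hh₁; have hk₁' := sm_deriv hk₁
    have hg₂' := sm_deriv hg₂; have hh₂' := sm_deriv hh₂; have hk₂' := sm_deriv hk₂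
    have hm₂' := sm_deriv hm₂
    refine ⟨fun t => (0:ℝ) * deriv m₂ t + (0:ℝ) * (2*t*deriv m₂ t)
        - (1/2) * (g₁ t * deriv g₂ t - deriv g₁ t * g₂ t)
        - (1/(2*a₁)) * (h₁ t * deriv h₂ t - deriv h₁ t * h₂ t)
        - (1/2) * (k₁ t * deriv k₂ t - deriv k₁ t * k₂ t), by fun_prop, ?_⟩
    rw [← padL a₁ g₁ h₁ k₁ m₁,
      master a₁ 0 0 0 g₁ h₁ k₁ m₁ g₂ h₂ k₂ m₂ hg₁ hh₁ hk₁ hm₁ hg₂ hh₂ hk₂ hm₂]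
    have eG : (fun t => (0:ℝ) * deriv g₂ t + (0:ℝ) * (2*t*deriv g₂ t - g₂ t) - (0:ℝ) * k₂ t)
        = fun _ => (0:ℝ) := by funext t; ring
    have eH : (fun t => (0:ℝ) * deriv h₂ t + (0:ℝ) * (2*t*deriv h₂ t - h₂ t))
        = fun _ => (0:ℝ) := by funext t; ring
    have eK : (fun t => (0:ℝ) * deriv k₂ t + (0:ℝ) * (2*t*deriv k₂ t - k₂ t) + (0:ℝ) * g₂ t)
        = fun _ => (0:ℝ) := by funext t; ring
    rw [eG, eH, eK, Yf_zero, Zf_zero, Qf_zero]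
    simp
  refine ⟨?_, part2, ?_⟩
  · intro V N₁ hV hN
    obtain ⟨c₁, c₂, c₃, g₀, h₀, k₀, m₀, hg₀, hh₀, hk₀, hm₀, rfl⟩ := hV
    obtain ⟨g, h, k, m, hg, hh, hk, hm, rfl⟩ := hN
    have hg₀' := sm_deriv hg₀; have hh₀' := sm_deriv hh₀; have hk₀' := sm_deriv hk₀
    have hg' := sm_deriv hg; have hh' := sm_deriv hh; have hk' := sm_deriv hk
    have hm' := sm_deriv hm
    exact ⟨_, _, _, _, by fun_prop, by fun_prop, by fun_prop, by fun_prop,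
      master a₁ c₁ c₂ c₃ g₀ h₀ k₀ m₀ g h k m hg₀ hh₀ hk₀ hm₀ hg hh hk hm⟩
  · intro N₁ N₂ N₃ h1 h2 h3
    obtain ⟨m, hm, e⟩ := part2 N₁ N₂ h1 h2
    obtain ⟨g₃, h₃, k₃, m₃, hg₃, hh₃, hk₃, hm₃, rfl⟩ := h3
    rw [e, WpadL a₁ m,
      master a₁ 0 0 0 (fun _ => (0:ℝ)) (fun _ => (0:ℝ)) (fun _ => (0:ℝ)) m g₃ h₃ k₃ m₃
        contDiff_const contDiff_const contDiff_const hm hg₃ hh₃ hk₃ hm₃]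
    have eG : (fun t => (0:ℝ) * deriv g₃ t + (0:ℝ) * (2*t*deriv g₃ t - g₃ t) - (0:ℝ) * k₃ t)
        = fun _ => (0:ℝ) := by funext t; ring
    have eH : (fun t => (0:ℝ) * deriv h₃ t + (0:ℝ) * (2*t*deriv h₃ t - h₃ t))
        = fun _ => (0:ℝ) := by funext t; ring
    have eK : (fun t => (0:ℝ) * deriv k₃ t + (0:ℝ) * (2*t*deriv k₃ t - k₃ t) + (0:ℝ) * g₃ t)
        = fun _ => (0:ℝ) := by funext t; ring
    have eM : (fun t => (0:ℝ) * deriv m₃ t + (0:ℝ) * (2*t*deriv m₃ t)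
          - (1/2) * ((fun _ => (0:ℝ)) t * deriv g₃ t - deriv (fun _ => (0:ℝ)) t * g₃ t)
          - (1/(2*a₁)) * ((fun _ => (0:ℝ)) t * deriv h₃ t - deriv (fun _ => (0:ℝ)) t * h₃ t)
          - (1/2) * ((fun _ => (0:ℝ)) t * deriv k₃ t - deriv (fun _ => (0:ℝ)) t * k₃ t))
        = fun _ => (0:ℝ) := by
      funext t; simp
    rw [eG, eH, eK, eM, Yf_zero, Zf_zero, Qf_zero, Wf_zero]
    simp

end
end
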